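/- arXiv:1905.03176 — 3 statements merged into one kernel-verified Lean document; each statement's English description precedes it below -/
import Mathlib

section
/- In the multi-target detection model with well-separated signals, i.e. s_k − s_{k−1} ≥ 2L−1 for all k, the deterministic identity a²_{s∗x}[l] = ρ₀ a_x²[l] holds for every 0 ≤ l ≤ L−1. -/
/-!
Well-separated copies of `x` never overlap within a window of length `L`, so in the product
`(s∗x)[i] (s∗x)[i+l]` only the terms pairing a copy with itself survive. Summing over `i`, each
copy then contributes exactly `L a_x²[l]`.
-/

/-- The sequence `z` of length `m`, zero-padded to all of `ℤ`. -/
noncomputable def zpad (m : ℕ) (z : ℕ → ℝ) : ℤ → ℝ :=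
  fun i => if 0 ≤ i ∧ i < (m : ℤ) then z i.toNat else 0

/-- Second-order autocorrelation of the length-`m` sequence `z` with integer shift `l`:
`a_z²[l] = (1/m) Σ_{i=0}^{m−1} z[i] z[i+l]`, with `z` extended by zero. -/
noncomputable def acorr2 (m : ℕ) (z : ℕ → ℝ) (l : ℤ) : ℝ :=
  (1 / (m : ℝ)) * ∑ i ∈ Finset.range m, zpad m z i * zpad m z (i + l)

/-- The (zero-padded) linear convolution `s∗x` of the binary sequence `s` with the signal `x`
of length `L`, where `s` has `M` nonzero entries at the positions `p 0 < p 1 < ⋯ < p (M−1)`: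
`(s∗x)[i] = Σ_k x[i − p k]`, with `x` extended by zero. -/
noncomputable def sconv (L M : ℕ) (x : ℕ → ℝ) (p : Fin M → ℕ) : ℤ → ℝ :=
  fun i => ∑ k : Fin M, zpad L x (i - (p k : ℤ))

open Finset

lemma zpad_eq_zero {m : ℕ} {z : ℕ → ℝ} {i : ℤ} (h : i < 0 ∨ (m : ℤ) ≤ i) :
    zpad m z i = 0 :=
  if_neg (by omega)

lemma zpad_mul_zpad_eq_zero {m : ℕ} {z : ℕ → ℝ} {u v : ℤ} (h : (m : ℤ) ≤ |u - v|) :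
    zpad m z u * zpad m z v = 0 := by
  rcases le_abs'.mp h with h | h
  · by_cases hu : u < 0
    · rw [zpad_eq_zero (Or.inl hu), zero_mul]
    · rw [zpad_eq_zero (i := v) (Or.inr (by omega)), mul_zero]
  · by_cases hv : v < 0
    · rw [zpad_eq_zero (Or.inl hv), mul_zero]
    · rw [zpad_eq_zero (Or.inr (by omega)), zero_mul]

lemma Finset.sum_mul_sum_eq_sum_mul_of_ne {ι R : Type*} [NonUnitalNonAssocSemiring R]
    (s : Finset ι) (f g : ι → R) (h : ∀ i ∈ s, ∀ j ∈ s, i ≠ j → f i * g j = 0) :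
    (∑ i ∈ s, f i) * (∑ j ∈ s, g j) = ∑ i ∈ s, f i * g i := by
  rw [sum_mul_sum]
  refine sum_congr rfl fun i hi => ?_
  exact sum_eq_single_of_mem i hi fun j hj hji => h i hi j hj hji.symm

lemma sum_range_sub_eq_sum_range {β : Type*} [AddCommMonoid β] {L N a : ℕ} {h : ℤ → β}
    (hsupp : ∀ j : ℤ, j < 0 ∨ (L : ℤ) ≤ j → h j = 0) (ha : a + L ≤ N) :
    ∑ i ∈ range N, h (i - a) = ∑ j ∈ range L, h j := by
  have hIco : ∑ i ∈ Ico a (a + L), h (i - a) = ∑ i ∈ range N, h (i - a) := by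
    refine sum_subset (fun i hi => ?_) fun i _ hi => hsupp _ ?_
    · simp only [mem_Ico, mem_range] at hi ⊢
      omega
    · simp only [mem_Ico] at hi
      omega
  rw [← hIco, sum_Ico_eq_sum_range, Nat.add_sub_cancel_left]
  simp

lemma Fin.add_le_of_lt_of_add_le_succ {M d : ℕ} {p : Fin M → ℕ}
    (hp : ∀ k : ℕ, ∀ hk : k + 1 < M, p ⟨k, Nat.lt_of_succ_lt hk⟩ + d ≤ p ⟨k + 1, hk⟩)
    {a b : Fin M} (hab : a < b) : p a + d ≤ p b := by
  obtain ⟨a, ha⟩ := a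
  obtain ⟨b, hb⟩ := b
  replace hab : a + 1 ≤ b := hab
  revert hb
  induction b, hab using Nat.le_induction with
  | base => exact hp a
  | succ b hab ih =>
    intro hb
    have := hp b hb
    have := ih (by omega)
    omega

lemma sconv_mul_sconv_eq_sum {L M : ℕ} {x : ℕ → ℝ} {p : Fin M → ℕ}
    (hsep : ∀ a b : Fin M, a < b → p a + (2 * L - 1) ≤ p b) {l : ℕ} (hl : l < L) (i : ℤ) :
    sconv L M x p i * sconv L M x p (i + l)
      = ∑ k : Fin M, zpad L x (i - p k) * zpad L x (i - p k + l) := by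
  rw [sconv, sconv, sum_mul_sum_eq_sum_mul_of_ne]
  · simp only [sub_add_eq_add_sub]
  · intro k _ k' _ hkk'
    apply zpad_mul_zpad_eq_zero
    rcases lt_or_gt_of_ne hkk' with h | h
    · have := hsep k k' h
      rw [abs_of_nonneg (by omega)]
      omega
    · have := hsep k' k h
      rw [abs_of_nonpos (by omega)]
      omega

/-- Multi-target detection with well-separated signals (consecutive occurrences separated by
at least `2L−1` positions): the deterministic identity `a²_{s∗x}[l] = ρ₀ a_x²[l]` holds for
every `0 ≤ l ≤ L−1`, where `ρ₀ = ML/N` and `a²_{s∗x}[l] = (1/N) Σ_{i<N} (s∗x)[i] (s∗x)[i+l]`. -/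
theorem mtd_second_order_well_separated
    (L N M : ℕ)
    (x : ℕ → ℝ) (p : Fin M → ℕ)
    (hsep : ∀ k : ℕ, ∀ hk : k + 1 < M, p ⟨k, by omega⟩ + (2 * L - 1) ≤ p ⟨k + 1, hk⟩)
    (hin : ∀ k : Fin M, p k + L ≤ N)
    (l : ℕ) (hl : l < L) :
    (1 / (N : ℝ)) * ∑ i ∈ Finset.range N, sconv L M x p i * sconv L M x p (i + l)
      = ((M : ℝ) * L / N) * acorr2 L x l := by
  have hsum : ∑ i ∈ range N, sconv L M x p i * sconv L M x p (i + l)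
      = M * ∑ j ∈ range L, zpad L x j * zpad L x (j + l) := by
    simp_rw [sconv_mul_sconv_eq_sum (fun _ _ => Fin.add_le_of_lt_of_add_le_succ hsep) hl]
    rw [sum_comm]
    have hsupp : ∀ j : ℤ, j < 0 ∨ (L : ℤ) ≤ j → zpad L x j * zpad L x (j + l) = 0 :=
      fun j hj => by rw [zpad_eq_zero hj, zero_mul]
    simp [sum_range_sub_eq_sum_range hsupp (hin _)]
  have hL : (L : ℝ) ≠ 0 := by exact_mod_cast (by omega : L ≠ 0)
  rw [hsum, acorr2]
  field_simp
end

section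
/- Fix L ≥ 1, σ > 0, segments y_0, …, y_{N_d−1} ∈ ℝ^L, and nonnegative weights w_m[l] for 0 ≤ m ≤ N_d−1 and 0 ≤ l ≤ 2L−1. Define F(x) = Σ_{m=0}^{N_d−1} Σ_{l=0}^{2L−1} w_m[l] g_l^{(m)}(x), where g_l^{(m)}(x) = −(1/(2σ²)) Σ_{i=0}^{L−1} ( y_m[i] − (Zx)[(i+l) mod 2L] )². If for every 0 ≤ j ≤ L−1 the denominator D_j = Σ_{m=0}^{N_d−1} Σ_{l=j+1}^{j+L} w_m[l] is strictly positive, then F is a concave quadratic function of x with a unique global maximizer x* given coordinatewise by x*[j] = ( Σ_{m=0}^{N_d−1} Σ_{l=j+1}^{j+L} w_m[l] y_m[j+L−l] ) / D_j. -/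
/-- Left zero-padding `Z : ℝ^L → ℝ^{2L}`: `(Zx)[i] = 0` for `0 ≤ i ≤ L−1` and
`(Zx)[i] = x[i−L]` for `L ≤ i ≤ 2L−1` (represented on `ℕ`, zero elsewhere). -/
noncomputable def Zpad (L : ℕ) (x : Fin L → ℝ) : ℕ → ℝ :=
  fun i => if h : L ≤ i ∧ i < 2 * L then x ⟨i - L, by omega⟩ else 0

/-- The (swap) log-likelihood term
`g_l^{(m)}(x) = −(1/(2σ²)) Σ_{i=0}^{L−1} ( y_m[i] − (Zx)[(i+l) mod 2L] )²`. -/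
noncomputable def loglik (L : ℕ) (σ : ℝ) (ym : ℕ → ℝ) (l : ℕ) (x : Fin L → ℝ) : ℝ :=
  -(1 / (2 * σ ^ 2)) * ∑ i ∈ Finset.range L, (ym i - Zpad L x ((i + l) % (2 * L))) ^ 2

/-- The M-step objective of the approximate EM algorithm (well-separated signals):
`F(x) = Σ_{m<N_d} Σ_{l<2L} w_m[l] g_l^{(m)}(x)`, where `y m` is the `m`-th segment and
`w m l` the posterior weight. -/
noncomputable def emObjective (L : ℕ) (σ : ℝ) (Nd : ℕ) (y : ℕ → ℕ → ℝ) (w : ℕ → ℕ → ℝ)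
    (x : Fin L → ℝ) : ℝ :=
  ∑ m ∈ Finset.range Nd, ∑ l ∈ Finset.range (2 * L), w m l * loglik L σ (y m) l x

/-! Zero padding decouples the coordinates: the shift `l` compares `x j` with `y_m[j + L - l]`
exactly when `j + 1 ≤ l ≤ j + L`, and every other sample of `y_m` with a zero. Hence
`F x = const - (1 / 2σ²) Σ_j Σ_{m,l} w_m[l] (y_m[j + L - l] - x j)²`, and completing the square
in each coordinate gives `F x = F x* - (1 / 2σ²) Σ_j D_j (x j - x* j)²` with all `D_j > 0`. -/

open Finset

lemma Zpad_add_self (L : ℕ) (x : Fin L → ℝ) (j : Fin L) : Zpad L x (j + L) = x j := by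
  rw [Zpad, dif_pos (by omega)]
  simp

lemma Zpad_add_mod_eq_zero {L i l : ℕ} (hi : i < L) (hl : l < 2 * L)
    (h : i + l < L ∨ 2 * L ≤ i + l) (x : Fin L → ℝ) : Zpad L x ((i + l) % (2 * L)) = 0 := by
  refine dif_neg fun ⟨hL, _⟩ => ?_
  rcases h with h | h
  · rw [Nat.mod_eq_of_lt (by omega)] at hL; omega
  · rw [Nat.mod_eq_sub_mod h, Nat.mod_eq_of_lt (by omega)] at hL; omega

theorem sum_range_comp_Zpad_add_mod {L l : ℕ} (hl : l < 2 * L) (h : ℕ → ℝ → ℝ)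
    (x : Fin L → ℝ) :
    ∑ i ∈ range L, h i (Zpad L x ((i + l) % (2 * L))) =
      ∑ i ∈ range L with i + l < L ∨ 2 * L ≤ i + l, h i 0 +
        ∑ j ∈ range L with l ∈ Icc (j + 1) (j + L), h (j + L - l) (Zpad L x (j + L)) := by
  rw [← sum_filter_add_sum_filter_not (range L) (fun i => i + l < L ∨ 2 * L ≤ i + l)]
  congr 1
  · refine sum_congr rfl fun i hi => ?_
    rw [mem_filter, mem_range] at hi
    rw [Zpad_add_mod_eq_zero hi.1 hl hi.2]
  · refine sum_nbij' (fun i => i + l - L) (fun j => j + L - l) ?_ ?_ ?_ ?_ ?_ <;>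
      simp only [mem_filter, mem_range, mem_Icc]
    · omega
    · omega
    · omega
    · omega
    · intro i hi
      rw [Nat.mod_eq_of_lt (by omega), show i + l - L + L - l = i by omega,
        show i + l - L + L = i + l by omega]

theorem sum_mul_sub_sq_of_sum_mul_eq {ι : Type*} (s : Finset ι) (w a : ι → ℝ) {μ : ℝ}
    (hμ : ∑ i ∈ s, w i * a i = μ * ∑ i ∈ s, w i) (t : ℝ) :
    ∑ i ∈ s, w i * (a i - t) ^ 2 =
      ∑ i ∈ s, w i * (a i - μ) ^ 2 + (∑ i ∈ s, w i) * (t - μ) ^ 2 := by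
  have expand : ∀ i, w i * (a i - t) ^ 2 =
      w i * (a i - μ) ^ 2 + 2 * (μ - t) * (w i * a i) + ((t - μ) ^ 2 - 2 * (μ - t) * μ) * w i :=
    fun i => by ring
  simp only [expand, sum_add_distrib, ← mul_sum, hμ]
  ring

section
variable {ι : Type*} [Fintype ι] (D x₀ : ι → ℝ)

theorem convexOn_sum_mul_sub_sq (hD : ∀ i, 0 ≤ D i) :
    ConvexOn ℝ Set.univ fun x : ι → ℝ => ∑ i, D i * (x i - x₀ i) ^ 2 := by
  have term : ∀ i, ConvexOn ℝ Set.univ fun x : ι → ℝ => D i * (x i - x₀ i) ^ 2 := fun i => by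
    have := ((Even.convexOn_pow even_two).translate_right (-x₀ i)).smul (hD i)
    simpa [neg_add_eq_sub, Function.comp_def] using
      this.comp_linearMap (LinearMap.proj (R := ℝ) (φ := fun _ : ι => ℝ) i)
  have := sum_induction (s := univ) (fun i (x : ι → ℝ) => D i * (x i - x₀ i) ^ 2)
    (ConvexOn ℝ Set.univ) (fun _ _ => ConvexOn.add) (convexOn_const 0 convex_univ)
    (fun i _ => term i)
  simpa [sum_fn] using this

theorem eq_of_sum_mul_sub_sq_nonpos (hD : ∀ i, 0 < D i) {x : ι → ℝ}
    (hx : ∑ i, D i * (x i - x₀ i) ^ 2 ≤ 0) : x = x₀ := by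
  have hterm : ∀ i ∈ univ, 0 ≤ D i * (x i - x₀ i) ^ 2 :=
    fun i _ => mul_nonneg (hD i).le (sq_nonneg _)
  have hzero := (sum_eq_zero_iff_of_nonneg hterm).mp (hx.antisymm (sum_nonneg hterm))
  funext i
  simpa [(hD i).ne', sub_eq_zero] using hzero i (mem_univ i)

end

noncomputable def emCoordCost (L Nd : ℕ) (y w : ℕ → ℕ → ℝ) (j : ℕ) (t : ℝ) : ℝ :=
  ∑ m ∈ range Nd, ∑ l ∈ Icc (j + 1) (j + L), w m l * (y m (j + L - l) - t) ^ 2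

theorem emCoordCost_eq_add_sq (L Nd : ℕ) (y w : ℕ → ℕ → ℝ) (j : ℕ) {μ : ℝ}
    (hμ : ∑ m ∈ range Nd, ∑ l ∈ Icc (j + 1) (j + L), w m l * y m (j + L - l) =
      μ * ∑ m ∈ range Nd, ∑ l ∈ Icc (j + 1) (j + L), w m l) (t : ℝ) :
    emCoordCost L Nd y w j t = emCoordCost L Nd y w j μ +
      (∑ m ∈ range Nd, ∑ l ∈ Icc (j + 1) (j + L), w m l) * (t - μ) ^ 2 := by
  simp only [emCoordCost, ← sum_product'] at hμ ⊢
  exact sum_mul_sub_sq_of_sum_mul_eq _ (fun p : ℕ × ℕ => w p.1 p.2)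
    (fun p : ℕ × ℕ => y p.1 (j + L - p.2)) hμ t

theorem exists_emObjective_eq (L : ℕ) (σ : ℝ) (Nd : ℕ) (y w : ℕ → ℕ → ℝ) :
    ∃ C, ∀ x : Fin L → ℝ, emObjective L σ Nd y w x =
      -(1 / (2 * σ ^ 2)) * (C + ∑ j : Fin L, emCoordCost L Nd y w j (x j)) := by
  let C := ∑ m ∈ range Nd, ∑ l ∈ range (2 * L),
    w m l * ∑ i ∈ range L with i + l < L ∨ 2 * L ≤ i + l, y m i ^ 2
  refine ⟨C, fun x => ?_⟩
  have swap : ∀ m, ∑ l ∈ range (2 * L), w m l *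
      ∑ j ∈ range L with l ∈ Icc (j + 1) (j + L), (y m (j + L - l) - Zpad L x (j + L)) ^ 2 =
      ∑ j ∈ range L, ∑ l ∈ Icc (j + 1) (j + L),
        w m l * (y m (j + L - l) - Zpad L x (j + L)) ^ 2 := by
    intro m
    simp only [mul_sum]
    exact sum_comm' fun l j => by simp only [mem_filter, mem_range, mem_Icc]; omega
  calc emObjective L σ Nd y w x
      = -(1 / (2 * σ ^ 2)) * ∑ m ∈ range Nd, ∑ l ∈ range (2 * L), w m l *
          ∑ i ∈ range L, (y m i - Zpad L x ((i + l) % (2 * L))) ^ 2 := by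
        rw [emObjective, mul_sum]
        refine sum_congr rfl fun m _ => ?_
        rw [mul_sum]
        exact sum_congr rfl fun l _ => by rw [loglik]; ring
    _ = -(1 / (2 * σ ^ 2)) * (C +
          ∑ m ∈ range Nd, ∑ j ∈ range L, ∑ l ∈ Icc (j + 1) (j + L),
            w m l * (y m (j + L - l) - Zpad L x (j + L)) ^ 2) := by
        simp only [C, ← swap, ← sum_add_distrib, ← mul_add]
        congr 1
        refine sum_congr rfl fun m _ => sum_congr rfl fun l hl => ?_
        rw [sum_range_comp_Zpad_add_mod (mem_range.mp hl) (fun i t => (y m i - t) ^ 2) x]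
        simp only [sub_zero]
    _ = _ := by
        rw [sum_comm, ← Fin.sum_univ_eq_sum_range]
        simp only [emCoordCost, Zpad_add_self]

theorem emObjective_unique_maximizer_general
    (L : ℕ) (σ : ℝ) (hσ : 0 < σ) (Nd : ℕ)
    (y : ℕ → ℕ → ℝ) (w : ℕ → ℕ → ℝ)
    (hD : ∀ j : Fin L,
      0 < ∑ m ∈ Finset.range Nd, ∑ l ∈ Finset.Icc ((j : ℕ) + 1) ((j : ℕ) + L), w m l) :
    ConcaveOn ℝ Set.univ (emObjective L σ Nd y w) ∧
    (∀ x : Fin L → ℝ, emObjective L σ Nd y w x ≤ emObjective L σ Nd y w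
      (fun j => (∑ m ∈ Finset.range Nd, ∑ l ∈ Finset.Icc ((j : ℕ) + 1) ((j : ℕ) + L),
          w m l * y m ((j : ℕ) + L - l))
        / ∑ m ∈ Finset.range Nd, ∑ l ∈ Finset.Icc ((j : ℕ) + 1) ((j : ℕ) + L), w m l)) ∧
    (∀ x : Fin L → ℝ,
      (∀ z : Fin L → ℝ, emObjective L σ Nd y w z ≤ emObjective L σ Nd y w x) →
      x = fun j : Fin L => (∑ m ∈ Finset.range Nd, ∑ l ∈ Finset.Icc ((j : ℕ) + 1) ((j : ℕ) + L),
          w m l * y m ((j : ℕ) + L - l))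
        / ∑ m ∈ Finset.range Nd, ∑ l ∈ Finset.Icc ((j : ℕ) + 1) ((j : ℕ) + L), w m l) := by
  set F := emObjective L σ Nd y w
  set D : Fin L → ℝ := fun j => ∑ m ∈ range Nd, ∑ l ∈ Icc ((j : ℕ) + 1) ((j : ℕ) + L), w m l
  set xs : Fin L → ℝ := fun j => (∑ m ∈ range Nd, ∑ l ∈ Icc ((j : ℕ) + 1) ((j : ℕ) + L),
    w m l * y m ((j : ℕ) + L - l)) / D j
  set G := fun x : Fin L → ℝ => ∑ j, D j * (x j - xs j) ^ 2
  have hc : 0 < 1 / (2 * σ ^ 2) := by positivity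
  have hF : ∀ x, F x = F xs - 1 / (2 * σ ^ 2) * G x := by
    obtain ⟨C, hC⟩ := exists_emObjective_eq L σ Nd y w
    intro x
    have hcost := fun j : Fin L =>
      emCoordCost_eq_add_sq L Nd y w j (div_mul_cancel₀ _ (hD j).ne').symm (x j)
    simp only [F, G, hC, hcost, sum_add_distrib]
    ring
  have hG : ∀ x, 0 ≤ G x := fun x => sum_nonneg fun j _ => mul_nonneg (hD j).le (sq_nonneg _)
  refine ⟨?_, fun x => ?_, fun x hx => ?_⟩
  · have := (concaveOn_const (F xs) convex_univ).sub
      ((convexOn_sum_mul_sub_sq D xs fun j => (hD j).le).smul hc.le)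
    exact this.congr fun x _ => (hF x).symm
  · rw [hF x]
    exact sub_le_self _ (mul_nonneg hc.le (hG x))
  · refine eq_of_sum_mul_sub_sq_nonpos D xs hD ?_
    have hmax := hx xs
    rw [hF x] at hmax
    exact nonpos_of_mul_nonpos_right (by linarith) hc

/-- Fix `L ≥ 1`, `σ > 0`, segments `y_0, …, y_{N_d−1} ∈ ℝ^L` and nonnegative weights
`w_m[l]` (`0 ≤ m < N_d`, `0 ≤ l ≤ 2L−1`). Let
`F(x) = Σ_m Σ_{l<2L} w_m[l] g_l^{(m)}(x)` with
`g_l^{(m)}(x) = −(1/(2σ²)) Σ_{i<L} ( y_m[i] − (Zx)[(i+l) mod 2L] )²`. If the denominators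
`D_j = Σ_m Σ_{l=j+1}^{j+L} w_m[l]` are strictly positive for all `0 ≤ j ≤ L−1`, then `F` is
concave with a unique global maximizer `x*` given coordinatewise by
`x*[j] = ( Σ_m Σ_{l=j+1}^{j+L} w_m[l] y_m[j+L−l] ) / D_j`. -/
theorem emObjective_unique_maximizer
    (L : ℕ) (hL : 1 ≤ L) (σ : ℝ) (hσ : 0 < σ) (Nd : ℕ)
    (y : ℕ → ℕ → ℝ) (w : ℕ → ℕ → ℝ) (hw : ∀ m l, 0 ≤ w m l)
    (hD : ∀ j : Fin L,
      0 < ∑ m ∈ Finset.range Nd, ∑ l ∈ Finset.Icc ((j : ℕ) + 1) ((j : ℕ) + L), w m l) :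
    ConcaveOn ℝ Set.univ (emObjective L σ Nd y w) ∧
    (∀ x : Fin L → ℝ, emObjective L σ Nd y w x ≤ emObjective L σ Nd y w
      (fun j => (∑ m ∈ Finset.range Nd, ∑ l ∈ Finset.Icc ((j : ℕ) + 1) ((j : ℕ) + L),
          w m l * y m ((j : ℕ) + L - l))
        / ∑ m ∈ Finset.range Nd, ∑ l ∈ Finset.Icc ((j : ℕ) + 1) ((j : ℕ) + L), w m l)) ∧
    (∀ x : Fin L → ℝ,
      (∀ z : Fin L → ℝ, emObjective L σ Nd y w z ≤ emObjective L σ Nd y w x) →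
      x = fun j : Fin L => (∑ m ∈ Finset.range Nd, ∑ l ∈ Finset.Icc ((j : ℕ) + 1) ((j : ℕ) + L),
          w m l * y m ((j : ℕ) + L - l))
        / ∑ m ∈ Finset.range Nd, ∑ l ∈ Finset.Icc ((j : ℕ) + 1) ((j : ℕ) + L), w m l) :=
  emObjective_unique_maximizer_general L σ hσ Nd y w hD
end

section
/- Let L ≥ 1 and let M, N be positive reals. Let ξ : ℕ → [0, ∞) satisfy ξ[l] = 0 for l < L and Σ_{l=0}^∞ ξ[l] = 1. Define α[l₁, l₂] = (M/N) ξ[l₁ − l₂] for L+1 ≤ l₁ ≤ 2L−1 and 1 ≤ l₂ ≤ l₁−L; define α[l] = (M/N) Σ_{j=2L−l}^∞ ξ[j] for 1 ≤ l ≤ L and α[l] = α[2L−l] for L < l ≤ 2L−1; and define ρ₁[i] = (ML/N) ξ[i+L] for 0 ≤ i ≤ L−2. Then Σ_{l=1}^{2L−1} α[l] + Σ_{l₁=L+1}^{2L−1} Σ_{l₂=1}^{l₁−L} α[l₁, l₂] = (2L−1) α[1] + Σ_{i=0}^{L−2} ((i+L)/L) ρ₁[i]. Consequently, for any α[0], the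 normalization condition α[0] + Σ_{l=1}^{2L−1} α[l] + Σ_{l₁=L+1}^{2L−1} Σ_{l₂=1}^{l₁−L} α[l₁, l₂] = 1 holds if and only if α[0] + (2L−1) α[1] + Σ_{i=0}^{L−2} ((i+L)/L) ρ₁[i] = 1. -/
/-- The tail sum `Σ_{j=t}^∞ ξ[j]`. -/
noncomputable def tailSum (ξ : ℕ → ℝ) (t : ℕ) : ℝ :=
  ∑' j : ℕ, if t ≤ j then ξ j else 0

/-- The single-occurrence prior: `α[l] = (M/N) Σ_{j=2L−l}^∞ ξ[j]` for `1 ≤ l ≤ L`, and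
`α[l] = α[2L−l] = (M/N) Σ_{j=l}^∞ ξ[j]` for `L < l ≤ 2L−1`. -/
noncomputable def priorSingle (L : ℕ) (M N : ℝ) (ξ : ℕ → ℝ) (l : ℕ) : ℝ :=
  if l ≤ L then (M / N) * tailSum ξ (2 * L - l) else (M / N) * tailSum ξ l

/-- The double-occurrence prior: `α[l₁,l₂] = (M/N) ξ[l₁−l₂]`. -/
noncomputable def priorDouble (M N : ℝ) (ξ : ℕ → ℝ) (l₁ l₂ : ℕ) : ℝ :=
  (M / N) * ξ (l₁ - l₂)

/-- `ρ₁[i] = (ML/N) ξ[i+L]` for `0 ≤ i ≤ L−2`. -/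
noncomputable def rho1 (L : ℕ) (M N : ℝ) (ξ : ℕ → ℝ) (i : ℕ) : ℝ :=
  (M * L / N) * ξ (i + L)

/-!
For `t ≤ 2L - 1` we have `tailSum ξ t = tailSum ξ (2L - 1) + Σ_{t ≤ j < 2L - 1} ξ j`, so each of
the `2L - 1` single priors is `α[1]` plus `M / N` times a finite sum of values of `ξ`. Exchanging
the order of summation, `ξ j` with `L ≤ j < 2L - 1` is counted `j + 1 - L` times by the `α[l]` with
`l ≤ L`, `j - L` times by those with `l > L`, and `2L - 1 - j` times by the double priors. These
counts add up to `j`, the coefficient of `(M / N) ξ j` in `(j / L) ρ₁[j - L]`.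
-/

open Finset

section IteratedSums

variable {β : Type*} [AddCommMonoid β]

/-- The terms with `j < a` have weight `j + 1 - a = 0` in `ℕ`, so the range may start at any
`c ≤ a`. -/
theorem sum_Icc_sum_Ico_eq_sum_Ico_nsmul {a b c : ℕ} (hca : c ≤ a) (f : ℕ → β) :
    ∑ s ∈ Icc a b, ∑ j ∈ Ico s b, f j = ∑ j ∈ Ico c b, (j + 1 - a) • f j := by
  rw [sum_comm' (t' := Ico c b) (s' := fun j => Icc a j) fun s j => by
    simp only [mem_Icc, mem_Ico]; omega]
  simp only [sum_const, Nat.card_Icc]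

theorem sum_Ioc_sum_Ico_eq_sum_Ico_nsmul (a b : ℕ) (f : ℕ → β) :
    ∑ s ∈ Ioc a b, ∑ j ∈ Ico a s, f j = ∑ j ∈ Ico a b, (b - j) • f j := by
  rw [sum_comm' (t' := Ico a b) (s' := fun j => Ioc j b) fun s j => by
    simp only [mem_Ioc, mem_Ico]; omega]
  simp only [sum_const, Nat.card_Ioc]

end IteratedSums

section TailSum

variable {ξ : ℕ → ℝ}

theorem tailSum_eq_add_tailSum_succ (hξ : Summable ξ) (t : ℕ) :
    tailSum ξ t = ξ t + tailSum ξ (t + 1) := by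
  have hsum : Summable fun j => if t ≤ j then ξ j else 0 :=
    (hξ.indicator (Set.Ici t)).congr fun j => by simp only [Set.indicator_apply, Set.mem_Ici]
  rw [tailSum, hsum.tsum_eq_add_tsum_ite t, if_pos le_rfl, tailSum]
  congr 1
  refine tsum_congr fun j => ?_
  by_cases hj : j = t
  · simp [hj]
  · rw [if_neg hj]
    split_ifs <;> first | rfl | omega

theorem tailSum_eq_sum_Ico_add_tailSum (hξ : Summable ξ) {s t : ℕ} (hst : s ≤ t) :
    tailSum ξ s = ∑ j ∈ Ico s t, ξ j + tailSum ξ t := by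
  induction t, hst using Nat.le_induction with
  | base => simp
  | succ t hst ih =>
    rw [ih, tailSum_eq_add_tailSum_succ hξ t, sum_Ico_succ_top hst, add_assoc]

theorem sum_Icc_tailSum (hξ : Summable ξ) {a b c : ℕ} (hca : c ≤ a) :
    ∑ s ∈ Icc a b, tailSum ξ s
      = (b + 1 - a) • tailSum ξ b + ∑ j ∈ Ico c b, (j + 1 - a) • ξ j := by
  rw [sum_congr rfl fun s hs => tailSum_eq_sum_Ico_add_tailSum hξ (mem_Icc.1 hs).2,
    sum_add_distrib, sum_Icc_sum_Ico_eq_sum_Ico_nsmul hca, sum_const, Nat.card_Icc, add_comm]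

end TailSum

section Priors

variable {L : ℕ} {M N : ℝ} {ξ : ℕ → ℝ}

theorem sum_priorSingle (hL : 1 ≤ L) :
    ∑ l ∈ Icc 1 (2 * L - 1), priorSingle L M N ξ l
      = M / N * (∑ s ∈ Icc L (2 * L - 1), tailSum ξ s
        + ∑ s ∈ Icc (L + 1) (2 * L - 1), tailSum ξ s) := by
  rw [show Icc 1 (2 * L - 1) = Ioc 0 (2 * L - 1) from Icc_add_one_left_eq_Ioc 0 _,
    ← sum_Ioc_consecutive _ (Nat.zero_le L) (by omega : L ≤ 2 * L - 1), Icc_add_one_left_eq_Ioc,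
    mul_add, mul_sum, mul_sum]
  congr 1
  · refine sum_nbij' (fun l => 2 * L - l) (fun s => 2 * L - s) ?_ ?_ ?_ ?_ ?_ <;>
      intro l hl <;> simp only [mem_Ioc, mem_Icc] at hl
    · simp only [mem_Icc]; omega
    · simp only [mem_Ioc]; omega
    · omega
    · omega
    · rw [priorSingle, if_pos hl.2]
  · refine sum_congr rfl fun l hl => ?_
    rw [priorSingle, if_neg (by simp only [mem_Ioc] at hl; omega)]

theorem sum_priorDouble :
    ∑ l₁ ∈ Icc (L + 1) (2 * L - 1), ∑ l₂ ∈ Icc 1 (l₁ - L), priorDouble M N ξ l₁ l₂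
      = M / N * ∑ j ∈ Ico L (2 * L - 1), (2 * L - 1 - j) • ξ j := by
  rw [← sum_Ioc_sum_Ico_eq_sum_Ico_nsmul, Icc_add_one_left_eq_Ioc, mul_sum]
  refine sum_congr rfl fun l₁ hl₁ => ?_
  rw [mul_sum]
  refine sum_nbij' (fun l₂ => l₁ - l₂) (fun j => l₁ - j) ?_ ?_ ?_ ?_ ?_ <;>
    intro l hl <;> simp only [mem_Icc, mem_Ico, mem_Ioc] at hl hl₁
  · simp only [mem_Ico]; omega
  · simp only [mem_Icc]; omega
  · omega
  · omega
  · rfl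

theorem sum_mul_rho1 (hL : L ≠ 0) :
    ∑ i ∈ range (L - 1), ((i + L : ℝ) / L) * rho1 L M N ξ i
      = M / N * ∑ j ∈ Ico L (2 * L - 1), (j : ℝ) * ξ j := by
  rw [sum_Ico_eq_sum_range, show 2 * L - 1 - L = L - 1 by omega, mul_sum]
  refine sum_congr rfl fun i _ => ?_
  rw [rho1, add_comm L i]
  push_cast
  field_simp

theorem sum_priorSingle_add_sum_priorDouble (hL : 1 ≤ L) (hξ : Summable ξ) :
    ∑ l ∈ Icc 1 (2 * L - 1), priorSingle L M N ξ l
        + ∑ l₁ ∈ Icc (L + 1) (2 * L - 1), ∑ l₂ ∈ Icc 1 (l₁ - L), priorDouble M N ξ l₁ l₂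
      = (2 * L - 1 : ℝ) * priorSingle L M N ξ 1
        + ∑ i ∈ range (L - 1), ((i + L : ℝ) / L) * rho1 L M N ξ i := by
  have hweights : ∑ j ∈ Ico L (2 * L - 1), (j + 1 - L) • ξ j
      + ∑ j ∈ Ico L (2 * L - 1), (j + 1 - (L + 1)) • ξ j
      + ∑ j ∈ Ico L (2 * L - 1), (2 * L - 1 - j) • ξ j
      = ∑ j ∈ Ico L (2 * L - 1), (j : ℝ) * ξ j := by
    rw [← sum_add_distrib, ← sum_add_distrib]
    refine sum_congr rfl fun j hj => ?_
    rw [← add_nsmul, ← add_nsmul, nsmul_eq_mul]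
    congr 1
    norm_cast
    simp only [mem_Ico] at hj
    omega
  have hcount : ((2 * L - 1 + 1 - L : ℕ) : ℝ) + ((2 * L - 1 + 1 - (L + 1) : ℕ) : ℝ)
      = 2 * L - 1 := by
    rw [show 2 * L - 1 + 1 - L = L by omega, show 2 * L - 1 + 1 - (L + 1) = L - 1 by omega,
      Nat.cast_sub hL]
    ring
  rw [sum_priorSingle hL, sum_priorDouble, sum_mul_rho1 (by omega),
    sum_Icc_tailSum hξ le_rfl, sum_Icc_tailSum hξ (Nat.le_succ L), priorSingle, if_pos hL,
    ← hweights]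
  simp only [nsmul_eq_mul]
  linear_combination (M / N * tailSum ξ (2 * L - 1)) * hcount

end Priors

theorem em_prior_normalization_general
    (L : ℕ) (hL : 1 ≤ L) (M N : ℝ)
    (ξ : ℕ → ℝ)
    (hξsum : ∑' l : ℕ, ξ l = 1) :
    ((∑ l ∈ Finset.Icc 1 (2 * L - 1), priorSingle L M N ξ l)
        + (∑ l₁ ∈ Finset.Icc (L + 1) (2 * L - 1), ∑ l₂ ∈ Finset.Icc 1 (l₁ - L),
            priorDouble M N ξ l₁ l₂)
      = (2 * (L : ℝ) - 1) * priorSingle L M N ξ 1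
        + ∑ i ∈ Finset.range (L - 1), (((i : ℝ) + L) / L) * rho1 L M N ξ i) ∧
    (∀ α₀ : ℝ,
      (α₀ + (∑ l ∈ Finset.Icc 1 (2 * L - 1), priorSingle L M N ξ l)
          + (∑ l₁ ∈ Finset.Icc (L + 1) (2 * L - 1), ∑ l₂ ∈ Finset.Icc 1 (l₁ - L),
              priorDouble M N ξ l₁ l₂) = 1)
        ↔ (α₀ + (2 * (L : ℝ) - 1) * priorSingle L M N ξ 1
            + (∑ i ∈ Finset.range (L - 1), (((i : ℝ) + L) / L) * rho1 L M N ξ i) = 1)) := by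
  have hξ : Summable ξ := by
    by_contra h
    exact zero_ne_one ((tsum_eq_zero_of_not_summable h).symm.trans hξsum)
  have key := sum_priorSingle_add_sum_priorDouble (M := M) (N := N) hL hξ
  exact ⟨key, fun α₀ => by rw [add_assoc, key, add_assoc]⟩

/-- Let `L ≥ 1`, let `M, N` be positive reals, and let `ξ : ℕ → [0,∞)` satisfy `ξ[l] = 0` for
`l < L` and `Σ_l ξ[l] = 1`. With the priors `α[l]`, `α[l₁,l₂]` and `ρ₁[i]` defined as above,
`Σ_{l=1}^{2L−1} α[l] + Σ_{l₁=L+1}^{2L−1} Σ_{l₂=1}^{l₁−L} α[l₁,l₂]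
  = (2L−1) α[1] + Σ_{i=0}^{L−2} ((i+L)/L) ρ₁[i]`.
Consequently, for any `α[0]`, the normalization condition
`α[0] + Σ_{l=1}^{2L−1} α[l] + Σ_{l₁,l₂} α[l₁,l₂] = 1` holds if and only if
`α[0] + (2L−1) α[1] + Σ_{i=0}^{L−2} ((i+L)/L) ρ₁[i] = 1`. -/
theorem em_prior_normalization
    (L : ℕ) (hL : 1 ≤ L) (M N : ℝ) (hM : 0 < M) (hN : 0 < N)
    (ξ : ℕ → ℝ) (hξ0 : ∀ l, 0 ≤ ξ l) (hξL : ∀ l < L, ξ l = 0)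
    (hξsum : ∑' l : ℕ, ξ l = 1) :
    ((∑ l ∈ Finset.Icc 1 (2 * L - 1), priorSingle L M N ξ l)
        + (∑ l₁ ∈ Finset.Icc (L + 1) (2 * L - 1), ∑ l₂ ∈ Finset.Icc 1 (l₁ - L),
            priorDouble M N ξ l₁ l₂)
      = (2 * (L : ℝ) - 1) * priorSingle L M N ξ 1
        + ∑ i ∈ Finset.range (L - 1), (((i : ℝ) + L) / L) * rho1 L M N ξ i) ∧
    (∀ α₀ : ℝ,
      (α₀ + (∑ l ∈ Finset.Icc 1 (2 * L - 1), priorSingle L M N ξ l)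
          + (∑ l₁ ∈ Finset.Icc (L + 1) (2 * L - 1), ∑ l₂ ∈ Finset.Icc 1 (l₁ - L),
              priorDouble M N ξ l₁ l₂) = 1)
        ↔ (α₀ + (2 * (L : ℝ) - 1) * priorSingle L M N ξ 1
            + (∑ i ∈ Finset.range (L - 1), (((i : ℝ) + L) / L) * rho1 L M N ξ i) = 1)) :=
  em_prior_normalization_general L hL M N ξ hξsum
end
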